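/- (Right-regularization) Let {x(t) : t ∈ ℝ} be a monotone system in a σ-lattice effect algebra E with ⋀_t x(t) = 0 and ⋁_t x(t) = 1. Then x_r(t) := ⋀_{u>t} x(u) exists for each t, the system {x_r(t)} is monotone with ⋀_t x_r(t) = 0, ⋁_t x_r(t) = 1, and satisfies the right-continuity condition ⋀_{t>s} x_r(t) = x_r(s) for all s. -/

import Mathlib

/-!
Since `x` is monotone, `x(t + 1/(n+1))` is coinitial in `{x(u) : u > t}`, so a countable
infimum already is `x_r(t)`. Everything else comes from `x(t) ≤ x_r(t) ≤ x(u)` for `t < u`: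
it makes `{x_r(t)}` and `{x(t)}` mutually coinitial and cofinal (giving the bounds `0` and `1`),
and likewise `{x_r(t) : t > s}` and `{x(u) : u > s}` (giving right continuity).
-/

structure EffectAlgebra (E : Type*) where
  add : E → E → Option E
  zero : E
  one : E
  comm : ∀ a b, add a b = add b a
  assoc : ∀ a b c, (add a b).bind (fun d => add d c) = (add b c).bind (fun d => add a d)
  orth : ∀ a : E, ∃! b, add a b = some one
  pos_one : ∀ a b, add a one = some b → a = zero

namespace EffectAlgebra

variable {E : Type*}

/-- The induced order: `a ≤ b` iff `a + c = b` for some `c`. -/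
def le (EA : EffectAlgebra E) (a b : E) : Prop := ∃ c, EA.add a c = some b

/-- The orthosupplement `a'`, the unique element with `a + a' = 1`. -/
noncomputable def orthosupp (EA : EffectAlgebra E) (a : E) : E :=
  Classical.choose (EA.orth a).exists

/-- `s` is the supremum of `S` with respect to the induced order. -/
def IsSup (EA : EffectAlgebra E) (S : Set E) (s : E) : Prop :=
  (∀ x ∈ S, EA.le x s) ∧ ∀ b, (∀ x ∈ S, EA.le x b) → EA.le s b

/-- `s` is the infimum of `S` with respect to the induced order. -/
def IsInf (EA : EffectAlgebra E) (S : Set E) (s : E) : Prop :=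
  (∀ x ∈ S, EA.le s x) ∧ ∀ b, (∀ x ∈ S, EA.le b x) → EA.le b s

/-- Every increasing sequence has a supremum. -/
def MonotoneSigmaComplete (EA : EffectAlgebra E) : Prop :=
  ∀ f : ℕ → E, (∀ n, EA.le (f n) (f (n + 1))) → ∃ s, EA.IsSup (Set.range f) s

/-- A σ-lattice effect algebra: countable suprema and infima exist. -/
def SigmaLattice (EA : EffectAlgebra E) : Prop :=
  (∀ f : ℕ → E, ∃ s, EA.IsSup (Set.range f) s) ∧
  (∀ f : ℕ → E, ∃ s, EA.IsInf (Set.range f) s)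

/-- A complete lattice effect algebra: arbitrary suprema and infima exist. -/
def CompleteEA (EA : EffectAlgebra E) : Prop :=
  (∀ S : Set E, ∃ s, EA.IsSup S s) ∧ (∀ S : Set E, ∃ s, EA.IsInf S s)

/-- A lattice effect algebra: binary suprema and infima exist. -/
def LatticeEA (EA : EffectAlgebra E) : Prop :=
  (∀ a b : E, ∃ s, EA.IsSup {a, b} s) ∧ (∀ a b : E, ∃ s, EA.IsInf {a, b} s)

end EffectAlgebra

/-- Borel subsets of the real line. -/
abbrev BorelSet := {A : Set ℝ // MeasurableSet A}

def bIio (t : ℝ) : BorelSet := ⟨Set.Iio t, measurableSet_Iio⟩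
def bIic (t : ℝ) : BorelSet := ⟨Set.Iic t, measurableSet_Iic⟩

/-- An observable on a (monotone σ-complete) effect algebra: a unital,
additive map on the Borel σ-algebra preserving suprema of increasing sequences. -/
structure Observable {E : Type*} (EA : EffectAlgebra E) where
  toFun : BorelSet → E
  unital : toFun ⟨Set.univ, MeasurableSet.univ⟩ = EA.one
  additive : ∀ A B : BorelSet, Disjoint A.1 B.1 →
    EA.add (toFun A) (toFun B) = some (toFun ⟨A.1 ∪ B.1, A.2.union B.2⟩)
  sup_cont : ∀ f : ℕ → BorelSet, (∀ n, (f n).1 ⊆ (f (n + 1)).1) →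
    EA.IsSup (Set.range fun n => toFun (f n))
      (toFun ⟨⋃ n, (f n).1, MeasurableSet.iUnion (fun n => (f n).2)⟩)

namespace Observable

variable {E : Type*} {EA : EffectAlgebra E}

/-- The Olson (spectral) order on observables. -/
def OlsonLe (x y : Observable EA) : Prop :=
  ∀ t : ℝ, EA.le (y.toFun (bIio t)) (x.toFun (bIio t))

/-- An observable is bounded if `x(C) = 1` for some compact set `C`. -/
def Bounded (x : Observable EA) : Prop :=
  ∃ C : Set ℝ, ∃ hC : IsCompact C, x.toFun ⟨C, hC.measurableSet⟩ = EA.one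

/-- `x` is the question observable `q_a` of the element `a`. -/
def IsQuestion (x : Observable EA) (a : E) : Prop :=
  ∀ t : ℝ, x.toFun (bIio t) =
    if t ≤ 0 then EA.zero else if t ≤ 1 then EA.orthosupp a else EA.one

/-- The spectrum of `x` lies in `[0,1]`. -/
def SpectrumIn01 (x : Observable EA) : Prop :=
  x.toFun ⟨Set.Icc 0 1, measurableSet_Icc⟩ = EA.one

/-- `z` is the infimum of `S` in the Olson order on bounded observables. -/
def IsOlsonInf (S : Set (Observable EA)) (z : Observable EA) : Prop :=
  z.Bounded ∧ (∀ x ∈ S, z.OlsonLe x) ∧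
    ∀ w : Observable EA, w.Bounded → (∀ x ∈ S, w.OlsonLe x) → w.OlsonLe z

/-- `z` is the supremum of `S` in the Olson order on bounded observables. -/
def IsOlsonSup (S : Set (Observable EA)) (z : Observable EA) : Prop :=
  z.Bounded ∧ (∀ x ∈ S, x.OlsonLe z) ∧
    ∀ w : Observable EA, w.Bounded → (∀ x ∈ S, x.OlsonLe w) → z.OlsonLe w

end Observable

/-- A spectral resolution: monotone, with infimum 0, supremum 1, left continuous. -/
def SpectralResolution {E : Type*} (EA : EffectAlgebra E) (F : ℝ → E) : Prop :=
  (∀ t s : ℝ, t < s → EA.le (F t) (F s)) ∧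
  EA.IsInf (Set.range F) EA.zero ∧
  EA.IsSup (Set.range F) EA.one ∧
  ∀ s : ℝ, EA.IsSup (F '' Set.Iio s) (F s)

open Set

namespace EffectAlgebra

variable {E : Type*} (EA : EffectAlgebra E)

lemma one_add_zero : EA.add EA.one EA.zero = some EA.one := by
  obtain ⟨b, hb, -⟩ := EA.orth EA.one
  have hb0 : b = EA.zero := EA.pos_one b EA.one (by rw [EA.comm]; exact hb)
  rwa [hb0] at hb

lemma add_zero (a : E) : EA.add a EA.zero = some a := by
  obtain ⟨a', ha', -⟩ := EA.orth a
  have h := EA.assoc a' a EA.zero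
  rw [EA.comm a' a, ha', Option.bind_some, EA.one_add_zero] at h
  obtain ⟨c, hc, hac⟩ : ∃ c, EA.add a EA.zero = some c ∧ EA.add a' c = some EA.one := by
    cases h' : EA.add a EA.zero with
    | none => simp [h'] at h
    | some c => rw [h', Option.bind_some] at h; exact ⟨c, rfl, h.symm⟩
  -- both `c` and `a` are the orthosupplement of `a'`
  obtain ⟨b, -, hb_unique⟩ := EA.orth a'
  rw [hc, hb_unique c hac, hb_unique a (by simp only [EA.comm a' a, ha'])]

lemma le_refl (a : E) : EA.le a a := ⟨EA.zero, EA.add_zero a⟩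

lemma le_trans {a b c : E} (hab : EA.le a b) (hbc : EA.le b c) : EA.le a c := by
  obtain ⟨d, hd⟩ := hab
  obtain ⟨e, he⟩ := hbc
  have h := EA.assoc a d e
  rw [hd, Option.bind_some, he] at h
  cases h' : EA.add d e with
  | none => simp [h'] at h
  | some f => rw [h', Option.bind_some] at h; exact ⟨f, h.symm⟩

variable {EA}

lemma IsInf.of_coinitial {S T : Set E} {s : E} (hT : EA.IsInf T s)
    (hTS : ∀ y ∈ T, ∃ z ∈ S, EA.le z y) (hST : ∀ z ∈ S, ∃ y ∈ T, EA.le y z) :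
    EA.IsInf S s := by
  refine ⟨fun z hz => ?_, fun b hb => hT.2 b fun y hy => ?_⟩
  · obtain ⟨y, hy, hyz⟩ := hST z hz
    exact EA.le_trans (hT.1 y hy) hyz
  · obtain ⟨z, hz, hzy⟩ := hTS y hy
    exact EA.le_trans (hb z hz) hzy

lemma IsSup.of_cofinal {S T : Set E} {s : E} (hT : EA.IsSup T s)
    (hTS : ∀ y ∈ T, ∃ z ∈ S, EA.le y z) (hST : ∀ z ∈ S, ∃ y ∈ T, EA.le z y) :
    EA.IsSup S s := by
  refine ⟨fun z hz => ?_, fun b hb => hT.2 b fun y hy => ?_⟩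
  · obtain ⟨y, hy, hzy⟩ := hST z hz
    exact EA.le_trans hzy (hT.1 y hy)
  · obtain ⟨z, hz, hyz⟩ := hTS y hy
    exact EA.le_trans hyz (hb z hz)

lemma IsInf.le_of_subset {S T : Set E} {a b : E} (ha : EA.IsInf S a) (hb : EA.IsInf T b)
    (hST : S ⊆ T) : EA.le b a :=
  ha.2 b fun z hz => hb.1 z (hST hz)

section MonotoneSystem

variable {x : ℝ → E} (hmono : ∀ t s : ℝ, t < s → EA.le (x t) (x s))
include hmono

lemma exists_isInf_image_Ioi (hσ : ∀ f : ℕ → E, ∃ s, EA.IsInf (range f) s) (t : ℝ) :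
    ∃ s, EA.IsInf (x '' Ioi t) s := by
  obtain ⟨s, hs⟩ := hσ fun n => x (t + 1 / (n + 1))
  refine ⟨s, hs.of_coinitial ?_ ?_⟩
  · rintro _ ⟨n, rfl⟩
    exact ⟨_, mem_image_of_mem x (lt_add_of_pos_right t Nat.one_div_pos_of_nat),
      EA.le_refl _⟩
  · rintro _ ⟨u, hu, rfl⟩
    obtain ⟨n, hn⟩ := exists_nat_one_div_lt (sub_pos.mpr (mem_Ioi.mp hu))
    exact ⟨_, ⟨n, rfl⟩, hmono _ _ (by linarith)⟩

lemma le_of_isInf_image_Ioi {t : ℝ} {a : E} (ha : EA.IsInf (x '' Ioi t) a) :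
    EA.le (x t) a :=
  ha.2 _ <| forall_mem_image.mpr fun _ hu => hmono _ _ hu

end MonotoneSystem

end EffectAlgebra

/-- right-regularization: for a monotone system `{x(t)}` with
infimum `0` and supremum `1` in a σ-lattice effect algebra, the infima
`x_r(t) := ⋀_{u>t} x(u)` all exist and `{x_r(t)}` is monotone, has infimum `0`,
supremum `1`, and is right-continuous: `⋀_{t>s} x_r(t) = x_r(s)`. -/
theorem stmt12 {E : Type*} (EA : EffectAlgebra E) (hE : EA.SigmaLattice)
    (x : ℝ → E)
    (hmono : ∀ t s : ℝ, t < s → EA.le (x t) (x s))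
    (hinf : EA.IsInf (Set.range x) EA.zero)
    (hsup : EA.IsSup (Set.range x) EA.one) :
    ∃ xr : ℝ → E,
      (∀ t : ℝ, EA.IsInf (x '' Set.Ioi t) (xr t)) ∧
      (∀ t s : ℝ, t < s → EA.le (xr t) (xr s)) ∧
      EA.IsInf (Set.range xr) EA.zero ∧
      EA.IsSup (Set.range xr) EA.one ∧
      (∀ s : ℝ, EA.IsInf (xr '' Set.Ioi s) (xr s)) := by
  choose xr hxr using EffectAlgebra.exists_isInf_image_Ioi hmono hE.2
  have x_le_xr : ∀ t, EA.le (x t) (xr t) := fun t =>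
    EffectAlgebra.le_of_isInf_image_Ioi hmono (hxr t)
  have xr_le_x : ∀ t u, t < u → EA.le (xr t) (x u) := fun t u h => (hxr t).1 _ ⟨u, h, rfl⟩
  refine ⟨xr, hxr, fun t s hts => (hxr s).le_of_subset (hxr t) ?_, ?_, ?_, fun s => ?_⟩
  · exact image_mono (Ioi_subset_Ioi hts.le)
  · refine hinf.of_coinitial ?_ ?_
    · rintro _ ⟨t, rfl⟩; exact ⟨_, ⟨t - 1, rfl⟩, xr_le_x _ _ (by linarith)⟩
    · rintro _ ⟨t, rfl⟩; exact ⟨_, ⟨t, rfl⟩, x_le_xr t⟩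
  · refine hsup.of_cofinal ?_ ?_
    · rintro _ ⟨t, rfl⟩; exact ⟨_, ⟨t, rfl⟩, x_le_xr t⟩
    · rintro _ ⟨t, rfl⟩; exact ⟨_, ⟨t + 1, rfl⟩, xr_le_x _ _ (by linarith)⟩
  · refine (hxr s).of_coinitial ?_ ?_
    · rintro _ ⟨u, hu : s < u, rfl⟩
      exact ⟨_, ⟨(s + u) / 2, show s < (s + u) / 2 by linarith, rfl⟩, xr_le_x _ _ (by linarith)⟩
    · rintro _ ⟨t, ht, rfl⟩; exact ⟨_, ⟨t, ht, rfl⟩, x_le_xr t⟩
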